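/- Let (X, μ) be a finite measure space and E a real normed space. Let (φₙ) be a sequence of measurable functions X → ℝ and φ : X → ℝ measurable, with |φₙ| ≤ 1 μ-a.e. for every n and |φ| ≤ 1 μ-a.e., and suppose ∫ φₙ g dμ → ∫ φ g dμ for every integrable g : X → ℝ (weak-* convergence in L^∞). Let uₙ, u, d : X → E be in L²(μ; E) with ‖uₙ − u‖_{L²(μ;E)} → 0. Then ∫ ((φₙ + 1)/2) ‖uₙ − d‖² dμ → ∫ ((φ + 1)/2) ‖u − d‖² dμ. -/

import Mathlib

open MeasureTheory Filter Topology

/-! Split `∫ ψₙ ‖uₙ - d‖² = ∫ ψₙ (‖uₙ - d‖² - ‖u - d‖²) + ∫ ψₙ ‖u - d‖²` with `ψₙ = (φₙ + 1)/2`.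
Since `|‖a‖² - ‖b‖²| ≤ ‖a - b‖ (‖a‖ + ‖b‖)`, Hölder's inequality turns `L²` convergence of
`uₙ - d` into `L¹` convergence of `‖uₙ - d‖²`, and the weights `ψₙ` are bounded by `1`, so the
first integral tends to `0`. The second converges by weak-* convergence of `φₙ` tested against
the integrable function `‖u - d‖²`. -/

namespace MeasureTheory

variable {X : Type*} [MeasurableSpace X] {μ : Measure X}

theorem eLpNorm_norm_sq_sub_norm_sq_le {E : Type*} [NormedAddCommGroup E] {f g : X → E}
    (hf : AEStronglyMeasurable f μ) (hg : AEStronglyMeasurable g μ) :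
    eLpNorm (fun x => ‖f x‖ ^ 2 - ‖g x‖ ^ 2) 1 μ
      ≤ eLpNorm (f - g) 2 μ * (eLpNorm f 2 μ + eLpNorm g 2 μ) := by
  calc eLpNorm (fun x => ‖f x‖ ^ 2 - ‖g x‖ ^ 2) 1 μ
      ≤ eLpNorm (fun x => ‖(f - g) x‖ * (‖f x‖ + ‖g x‖)) 1 μ := by
        refine eLpNorm_mono_real fun x => ?_
        rw [Real.norm_eq_abs, sq_sub_sq, abs_mul, abs_of_nonneg (by positivity), mul_comm]
        exact mul_le_mul_of_nonneg_right (abs_norm_sub_norm_le _ _) (by positivity)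
    _ ≤ eLpNorm (f - g) 2 μ * eLpNorm (fun x => ‖f x‖ + ‖g x‖) 2 μ := by
        have := eLpNorm_le_eLpNorm_mul_eLpNorm_of_nnnorm (hf.sub hg) (hf.norm.add hg.norm)
          (fun (a : E) (r : ℝ) => ‖a‖ * r) 1 (.of_forall fun x => by simp [nnnorm_mul])
          (p := 2) (q := 2) (r := 1)
        rwa [ENNReal.coe_one, one_mul] at this
    _ ≤ eLpNorm (f - g) 2 μ * (eLpNorm f 2 μ + eLpNorm g 2 μ) := by
        gcongr
        have := eLpNorm_add_le hf.norm hg.norm one_le_two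
        rwa [eLpNorm_norm, eLpNorm_norm] at this

theorem tendsto_eLpNorm_norm_sq_sub_norm_sq {ι E : Type*} [NormedAddCommGroup E] {l : Filter ι}
    {v : ι → X → E} {w : X → E} (hv : ∀ i, AEStronglyMeasurable (v i) μ) (hw : MemLp w 2 μ)
    (hlim : Tendsto (fun i => eLpNorm (v i - w) 2 μ) l (𝓝 0)) :
    Tendsto (fun i => eLpNorm (fun x => ‖v i x‖ ^ 2 - ‖w x‖ ^ 2) 1 μ) l (𝓝 0) := by
  have hbound : ∀ i, eLpNorm (fun x => ‖v i x‖ ^ 2 - ‖w x‖ ^ 2) 1 μ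
      ≤ eLpNorm (v i - w) 2 μ * (eLpNorm (v i - w) 2 μ + 2 * eLpNorm w 2 μ) := by
    intro i
    refine (eLpNorm_norm_sq_sub_norm_sq_le (hv i) hw.aestronglyMeasurable).trans ?_
    have hvi : eLpNorm (v i) 2 μ ≤ eLpNorm (v i - w) 2 μ + eLpNorm w 2 μ := by
      simpa using eLpNorm_add_le ((hv i).sub hw.aestronglyMeasurable) hw.aestronglyMeasurable one_le_two
    calc eLpNorm (v i - w) 2 μ * (eLpNorm (v i) 2 μ + eLpNorm w 2 μ)
        ≤ eLpNorm (v i - w) 2 μ * (eLpNorm (v i - w) 2 μ + eLpNorm w 2 μ + eLpNorm w 2 μ) := by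
          gcongr
      _ = _ := by rw [add_assoc, ← two_mul]
  have hprod : Tendsto (fun i => eLpNorm (v i - w) 2 μ * (eLpNorm (v i - w) 2 μ
      + 2 * eLpNorm w 2 μ)) l (𝓝 0) := by
    have hw_fin : 2 * eLpNorm w 2 μ ≠ ⊤ := ENNReal.mul_ne_top ENNReal.ofNat_ne_top hw.eLpNorm_ne_top
    simpa using ENNReal.Tendsto.mul hlim (.inr (by simpa using hw_fin))
      (hlim.add tendsto_const_nhds) (.inr ENNReal.zero_ne_top)
  exact tendsto_of_tendsto_of_tendsto_of_le_of_le tendsto_const_nhds hprod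
    (fun _ => zero_le) hbound

theorem tendsto_integral_mul_of_tendsto_eLpNorm_one {ι : Type*} {l : Filter ι}
    {ψ h : ι → X → ℝ} {C : ℝ} (hψ : ∀ i, AEStronglyMeasurable (ψ i) μ)
    (hψC : ∀ i, ∀ᵐ x ∂μ, ‖ψ i x‖ ≤ C) (hh : ∀ i, Integrable (h i) μ)
    (hlim : Tendsto (fun i => eLpNorm (h i) 1 μ) l (𝓝 0)) :
    Tendsto (fun i => ∫ x, ψ i x * h i x ∂μ) l (𝓝 0) := by
  have hbound : ∀ i, eLpNorm (fun x => ψ i x * h i x) 1 μ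
      ≤ ENNReal.ofReal C * eLpNorm (h i) 1 μ := fun i =>
    eLpNorm_le_mul_eLpNorm_of_ae_le_mul ((hψC i).mono fun x hx => by
      rw [norm_mul]; exact mul_le_mul_of_nonneg_right hx (norm_nonneg _)) 1
  have hsqueeze : Tendsto (fun i => eLpNorm (fun x => ψ i x * h i x) 1 μ) l (𝓝 0) := by
    refine tendsto_of_tendsto_of_tendsto_of_le_of_le tendsto_const_nhds ?_
      (fun _ => zero_le) hbound
    simpa using ENNReal.Tendsto.const_mul hlim (.inr ENNReal.ofReal_ne_top)
  simpa using tendsto_integral_of_L1' (μ := μ) 0 aestronglyMeasurable_zero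
    (.of_forall fun i => (hh i).bdd_mul (hψ i) (hψC i)) (by simpa using hsqueeze)

theorem tendsto_integral_mul_sub_integral_mul {ι : Type*} {l : Filter ι}
    {ψ f : ι → X → ℝ} {g : X → ℝ} {C : ℝ} (hψ : ∀ i, AEStronglyMeasurable (ψ i) μ)
    (hψC : ∀ i, ∀ᵐ x ∂μ, ‖ψ i x‖ ≤ C) (hf : ∀ i, Integrable (f i) μ) (hg : Integrable g μ)
    (hlim : Tendsto (fun i => eLpNorm (f i - g) 1 μ) l (𝓝 0)) :
    Tendsto (fun i => ∫ x, ψ i x * f i x ∂μ - ∫ x, ψ i x * g x ∂μ) l (𝓝 0) := by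
  have hsub : ∀ i, ∫ x, ψ i x * f i x ∂μ - ∫ x, ψ i x * g x ∂μ
      = ∫ x, ψ i x * (f i - g) x ∂μ := fun i => by
    rw [← integral_sub ((hf i).bdd_mul (hψ i) (hψC i)) (hg.bdd_mul (hψ i) (hψC i))]
    simp only [Pi.sub_apply, mul_sub]
  simpa only [hsub] using
    tendsto_integral_mul_of_tendsto_eLpNorm_one hψ hψC (fun i => (hf i).sub hg) hlim

theorem integral_add_one_div_two_mul {ψ g : X → ℝ} (hψg : Integrable (fun x => ψ x * g x) μ)
    (hg : Integrable g μ) :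
    ∫ x, (ψ x + 1) / 2 * g x ∂μ = (∫ x, ψ x * g x ∂μ + ∫ x, g x ∂μ) / 2 := by
  rw [← integral_add hψg hg, ← integral_div]
  congr 1 with x
  ring

theorem tendsto_integral_add_one_div_two_mul {ι : Type*} {l : Filter ι} {φs : ι → X → ℝ}
    {φ g : X → ℝ} (hφs : ∀ i, AEStronglyMeasurable (φs i) μ) (hφs_bdd : ∀ i, ∀ᵐ x ∂μ, |φs i x| ≤ 1)
    (hφ : AEStronglyMeasurable φ μ) (hφ_bdd : ∀ᵐ x ∂μ, |φ x| ≤ 1) (hg : Integrable g μ)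
    (hweak : Tendsto (fun i => ∫ x, φs i x * g x ∂μ) l (𝓝 (∫ x, φ x * g x ∂μ))) :
    Tendsto (fun i => ∫ x, (φs i x + 1) / 2 * g x ∂μ) l (𝓝 (∫ x, (φ x + 1) / 2 * g x ∂μ)) := by
  simp only [← Real.norm_eq_abs] at hφs_bdd hφ_bdd
  rw [integral_add_one_div_two_mul (hg.bdd_mul hφ hφ_bdd) hg]
  simp only [integral_add_one_div_two_mul (hg.bdd_mul (hφs _) (hφs_bdd _)) hg]
  exact (hweak.add_const _).div_const 2

end MeasureTheory

theorem stmt_4_general {X : Type*} [MeasurableSpace X] (μ : Measure X)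
    {E : Type*} [NormedAddCommGroup E]
    (φₙ : ℕ → X → ℝ) (φ : X → ℝ)
    (hφₙ_meas : ∀ n, Measurable (φₙ n)) (hφ_meas : Measurable φ)
    (hφₙ_bdd : ∀ n, ∀ᵐ x ∂μ, |φₙ n x| ≤ 1) (hφ_bdd : ∀ᵐ x ∂μ, |φ x| ≤ 1)
    (hweak : ∀ g : X → ℝ, Integrable g μ →
      Tendsto (fun n => ∫ x, φₙ n x * g x ∂μ) atTop (𝓝 (∫ x, φ x * g x ∂μ)))
    (uₙ : ℕ → X → E) (u d : X → E)
    (huₙ : ∀ n, MemLp (uₙ n) 2 μ) (hu : MemLp u 2 μ) (hd : MemLp d 2 μ)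
    (huₙ_conv : Tendsto (fun n => eLpNorm (fun x => uₙ n x - u x) 2 μ) atTop (𝓝 0)) :
    Tendsto (fun n => ∫ x, ((φₙ n x + 1) / 2) * ‖uₙ n x - d x‖ ^ 2 ∂μ) atTop
      (𝓝 (∫ x, ((φ x + 1) / 2) * ‖u x - d x‖ ^ 2 ∂μ)) := by
  have hψ_meas : ∀ n, AEStronglyMeasurable (fun x => (φₙ n x + 1) / 2) μ := fun n =>
    (((hφₙ_meas n).add_const 1).div_const 2).aestronglyMeasurable
  have hψ_bdd : ∀ n, ∀ᵐ x ∂μ, ‖(φₙ n x + 1) / 2‖ ≤ 1 := fun n =>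
    (hφₙ_bdd n).mono fun x hx => by
      obtain ⟨hlo, hhi⟩ := abs_le.mp hx
      rw [Real.norm_eq_abs, abs_le]
      constructor <;> linarith
  have hg : Integrable (fun x => ‖u x - d x‖ ^ 2) μ := (hu.sub hd).integrable_norm_pow two_ne_zero
  have hdiff := tendsto_integral_mul_sub_integral_mul hψ_meas hψ_bdd
    (fun n => ((huₙ n).sub hd).integrable_norm_pow two_ne_zero) hg
    (tendsto_eLpNorm_norm_sq_sub_norm_sq (fun n => ((huₙ n).sub hd).aestronglyMeasurable)
      (hu.sub hd) (by simpa only [Pi.sub_def, sub_sub_sub_cancel_right] using huₙ_conv))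
  have hlim := tendsto_integral_add_one_div_two_mul (fun n => (hφₙ_meas n).aestronglyMeasurable)
    hφₙ_bdd hφ_meas.aestronglyMeasurable hφ_bdd hg (hweak _ hg)
  simpa only [sub_add_cancel, zero_add, Pi.sub_apply] using hdiff.add hlim

/-- Continuity of the tracking-type part of the objective (convergence
(conv:timetracking) in Theorem 4.2): if `φₙ ⇀* φ` in `L^∞` with `|φₙ| ≤ 1`
a.e. and `uₙ → u` in `L²`, then
`∫ ((φₙ+1)/2) ‖uₙ − d‖² → ∫ ((φ+1)/2) ‖u − d‖²`. -/
theorem stmt_4 {X : Type*} [MeasurableSpace X] (μ : Measure X) [IsFiniteMeasure μ]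
    {E : Type*} [NormedAddCommGroup E] [NormedSpace ℝ E]
    (φₙ : ℕ → X → ℝ) (φ : X → ℝ)
    (hφₙ_meas : ∀ n, Measurable (φₙ n)) (hφ_meas : Measurable φ)
    (hφₙ_bdd : ∀ n, ∀ᵐ x ∂μ, |φₙ n x| ≤ 1) (hφ_bdd : ∀ᵐ x ∂μ, |φ x| ≤ 1)
    (hweak : ∀ g : X → ℝ, Integrable g μ →
      Tendsto (fun n => ∫ x, φₙ n x * g x ∂μ) atTop (𝓝 (∫ x, φ x * g x ∂μ)))
    (uₙ : ℕ → X → E) (u d : X → E)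
    (huₙ : ∀ n, MemLp (uₙ n) 2 μ) (hu : MemLp u 2 μ) (hd : MemLp d 2 μ)
    (huₙ_conv : Tendsto (fun n => eLpNorm (fun x => uₙ n x - u x) 2 μ) atTop (𝓝 0)) :
    Tendsto (fun n => ∫ x, ((φₙ n x + 1) / 2) * ‖uₙ n x - d x‖ ^ 2 ∂μ) atTop
      (𝓝 (∫ x, ((φ x + 1) / 2) * ‖u x - d x‖ ^ 2 ∂μ)) :=
  stmt_4_general μ φₙ φ hφₙ_meas hφ_meas hφₙ_bdd hφ_bdd hweak uₙ u d huₙ hu hd huₙ_conv
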